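/- For n a positive integer and m ∈ {0,1,2}, the determinant of the n×n matrix whose (i,j) entry is the binomial coefficient C(2j-m, n-i) equals (-2)^(n(n-1)/2), independent of m. -/

import Mathlib

/-!
Reversing the rows and transposing turns the matrix into `(C(c + 2i, j))_{i,j}` with `c = 2 - m`,
at the cost of the sign `(-1)^(n(n-1)/2)` of the reversal. Multiplying column `j` by `j!` turns
`C(x, j)` into the monic falling factorial of degree `j`, so `(∏ j!) · det (C(c + 2i, j))` is the
Vandermonde determinant of the nodes `c + 2i`, which is `2^(n(n-1)/2)` times the one of the nodes
`0, …, n-1`. The latter equals `∏ j!` because `(C(i, j))` is unitriangular.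
-/

open Finset Equiv Equiv.Perm Matrix Nat

namespace Matrix

variable {n : ℕ}

theorem det_choose_mul_prod_factorial (v : Fin n → ℕ) :
    (∏ j : Fin n, ((j : ℕ)! : ℤ)) * (of fun i j : Fin n => ((v i).choose j : ℤ)).det =
      (vandermonde fun i => (v i : ℤ)).det := by
  rw [det_eval_matrixOfPolynomials_eq_det_vandermonde _ (fun j => descPochhammer ℤ j)
    (fun j => descPochhammer_natDegree ℤ j) (fun j => monic_descPochhammer ℤ j), ← det_mul_row]
  congr 1
  ext i j
  simp [descPochhammer_eval_eq_descFactorial, Nat.descFactorial_eq_factorial_mul_choose]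

theorem det_choose_self : (of fun i j : Fin n => ((i : ℕ).choose j : ℤ)).det = 1 := by
  rw [det_of_isLowerTriangular]
  · simp
  · intro i j hij
    rw [OrderDual.toDual_lt_toDual] at hij
    simp [Nat.choose_eq_zero_of_lt hij]

theorem det_vandermonde_mul_left {R : Type*} [CommRing R] (d : R) (v : Fin n → R) :
    (vandermonde fun i => d * v i).det = d ^ (n * (n - 1) / 2) * (vandermonde v).det := by
  have hcols : vandermonde (fun i => d * v i) =
      of fun i j : Fin n => d ^ (j : ℕ) * vandermonde v i j := by
    ext i j
    simp [vandermonde_apply, mul_pow]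
  rw [hcols, det_mul_row, prod_pow_eq_pow_sum, Fin.sum_univ_eq_sum_range (fun j => j), sum_range_id]

theorem det_choose_affine (c d : ℕ) :
    (of fun i j : Fin n => ((d * i + c).choose j : ℤ)).det = d ^ (n * (n - 1) / 2) := by
  have hfact : (∏ j : Fin n, ((j : ℕ)! : ℤ)) ≠ 0 := prod_ne_zero_iff.2 fun j _ => by positivity
  apply mul_left_cancel₀ hfact
  rw [det_choose_mul_prod_factorial]
  push_cast
  rw [det_vandermonde_add, det_vandermonde_mul_left, ← det_choose_mul_prod_factorial (fun i => i),
    det_choose_self]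
  ring

end Matrix

theorem Fin.revPerm_succ (n : ℕ) :
    (Fin.revPerm : Perm (Fin (n + 1))) =
      decomposeFin.symm (0, Fin.revPerm) * finRotate (n + 1) := by
  ext i
  induction i using Fin.lastCases with
  | last => simp
  | cast k =>
    simp [decomposeFin_symm_apply_succ]
    omega

theorem Fin.sign_revPerm (n : ℕ) :
    sign (Fin.revPerm : Perm (Fin n)) = (-1) ^ (n * (n - 1) / 2) := by
  rw [← Nat.choose_two_right]
  induction n with
  | zero => decide
  | succ n ih =>
    rw [Fin.revPerm_succ, Perm.sign_mul, decomposeFin.symm_sign, ih, sign_finRotate,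
      Nat.choose_succ_succ, Nat.choose_one_right]
    simp [pow_add, mul_comm]

theorem binom_det_general_general (n : ℕ) (m : ℕ) (hm : m ≤ 2) :
    (Matrix.of fun i j : Fin n =>
        ((2 * (j : ℕ) + 2 - m).choose (n - 1 - (i : ℕ)) : ℤ)).det =
      (-2) ^ (n * (n - 1) / 2) := by
  have hreindex :
      (of fun i j : Fin n => ((2 * (j : ℕ) + 2 - m).choose (n - 1 - (i : ℕ)) : ℤ)) =
        (of fun i j : Fin n => ((2 * (i : ℕ) + (2 - m)).choose j : ℤ))ᵀ.submatrix
          Fin.revPerm id := by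
    ext i j
    simp only [of_apply, submatrix_apply, transpose_apply, Fin.revPerm_apply, Fin.val_rev, id]
    congr 2 <;> omega
  rw [hreindex, det_permute, det_transpose, det_choose_affine, Fin.sign_revPerm]
  push_cast
  rw [← mul_pow, neg_one_mul]

theorem binom_det_general (n : ℕ) (hn : 0 < n) (m : ℕ) (hm : m ≤ 2) :
    (Matrix.of fun i j : Fin n =>
        ((2 * (j : ℕ) + 2 - m).choose (n - 1 - (i : ℕ)) : ℤ)).det =
      (-2) ^ (n * (n - 1) / 2) :=
  binom_det_general_general n m hm
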